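/- arXiv:2302.04993 — 2 statements merged into one kernel-verified Lean document; each statement's English description precedes it below -/
import Mathlib

section
/- For a complex symmetric matrix A, if λ > 0 and x ≠ 0 satisfy A x = λ x̄ (antilinear eigenvalue problem), then there exists an index i such that |λ − |a_{ii}|| ≤ Σ_{j≠i} |a_{ij}|. (Gershgorin-type theorem for the antilinear eigenvalue problem.) -/
open Matrix

/-!
Conjugation does not change moduli, so `A x = λ x̄` gives `‖(A x)ᵢ‖ = λ ‖xᵢ‖` and the
row estimate behind Gershgorin's theorem applies verbatim at an index where `‖xᵢ‖` is maximal.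
-/

theorem Function.exists_norm_apply_pos_forall_le {ι E : Type*} [Finite ι]
    [NormedAddCommGroup E] {x : ι → E} (hx : x ≠ 0) :
    ∃ i, 0 < ‖x i‖ ∧ ∀ j, ‖x j‖ ≤ ‖x i‖ := by
  obtain ⟨i₀, hi₀⟩ := Function.ne_iff.mp hx
  have : Nonempty ι := ⟨i₀⟩
  obtain ⟨i, hmax⟩ := Finite.exists_max fun j => ‖x j‖
  exact ⟨i, (norm_pos_iff.mpr hi₀).trans_le (hmax i₀), hmax⟩

theorem Matrix.abs_norm_mulVec_apply_sub_le {ι K : Type*} [Fintype ι] [DecidableEq ι]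
    [NormedDivisionRing K] (A : Matrix ι ι K) {x : ι → K} {i : ι}
    (hmax : ∀ j, ‖x j‖ ≤ ‖x i‖) :
    |‖(A *ᵥ x) i‖ - ‖A i i‖ * ‖x i‖| ≤ (∑ j ∈ Finset.univ.erase i, ‖A i j‖) * ‖x i‖ := by
  calc |‖(A *ᵥ x) i‖ - ‖A i i‖ * ‖x i‖|
      = |‖(A *ᵥ x) i‖ - ‖A i i * x i‖| := by rw [norm_mul]
    _ ≤ ‖(A *ᵥ x) i - A i i * x i‖ := abs_norm_sub_norm_le _ _
    _ = ‖∑ j ∈ Finset.univ.erase i, A i j * x j‖ := by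
      rw [mulVec, dotProduct, ← Finset.add_sum_erase _ _ (Finset.mem_univ i),
        add_sub_cancel_left]
    _ ≤ ∑ j ∈ Finset.univ.erase i, ‖A i j‖ * ‖x i‖ :=
      (norm_sum_le _ _).trans <| Finset.sum_le_sum fun j _ =>
        (norm_mul_le _ _).trans <| mul_le_mul_of_nonneg_left (hmax j) (norm_nonneg _)
    _ = (∑ j ∈ Finset.univ.erase i, ‖A i j‖) * ‖x i‖ := (Finset.sum_mul _ _ _).symm

theorem stmt_1_general (n : ℕ) (A : Matrix (Fin n) (Fin n) ℂ)
    (lam : ℝ) (hlam : 0 < lam) (x : Fin n → ℂ) (hx : x ≠ 0)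
    (heig : A.mulVec x = (lam : ℂ) • star x) :
    ∃ i, |lam - ‖A i i‖| ≤ ∑ j ∈ Finset.univ.erase i, ‖A i j‖ := by
  obtain ⟨i, hxi, hmax⟩ := Function.exists_norm_apply_pos_forall_le hx
  have hrow : ‖(A *ᵥ x) i‖ = lam * ‖x i‖ := by
    rw [heig, Pi.smul_apply, norm_smul, Complex.norm_real, Real.norm_of_nonneg hlam.le,
      Pi.star_apply, norm_star]
  refine ⟨i, le_of_mul_le_mul_right ?_ hxi⟩
  calc |lam - ‖A i i‖| * ‖x i‖ = |‖(A *ᵥ x) i‖ - ‖A i i‖ * ‖x i‖| := by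
        rw [hrow, ← sub_mul, abs_mul, abs_of_pos hxi]
    _ ≤ _ := A.abs_norm_mulVec_apply_sub_le hmax

/-- Gershgorin-type theorem for the antilinear eigenvalue problem `A x = λ x̄`
of a complex symmetric matrix. -/
theorem stmt_1 (n : ℕ) (A : Matrix (Fin n) (Fin n) ℂ) (hsym : Aᵀ = A)
    (lam : ℝ) (hlam : 0 < lam) (x : Fin n → ℂ) (hx : x ≠ 0)
    (heig : A.mulVec x = (lam : ℂ) • star x) :
    ∃ i, |lam - ‖A i i‖| ≤ ∑ j ∈ Finset.univ.erase i, ‖A i j‖ :=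
  stmt_1_general n A lam hlam x hx heig
end

section
/- Let A ∈ ℂ^{n×n} be complex symmetric (A = Aᵀ). Then ‖A‖₂ = sup{ λ ≥ 0 : ∃ x ≠ 0, A x = λ x̄ }, i.e., the largest singular value of A is attained as a 'coneigenvalue' of the antilinear map x ↦ A x̄. (Takagi factorization consequence.) -/
/-!
A coneigenpair `A x = λ x̄` with `x ≠ 0` gives `‖A x‖ = λ ‖x‖`, so every coneigenvalue is at most
`‖A‖`. Conversely `‖A‖²` is the top of the spectrum of the positive matrix `Aᴴ A`; for an
eigenvector `v`, symmetry of `A` gives `A (conj (A v)) = ‖A‖² v̄`, so `x = ‖A‖ v + conj (A v)` is a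
coneigenvector for `‖A‖`, and if that vector vanishes then `x = i v` is one.
-/

open Matrix
open scoped Matrix.Norms.L2Operator

namespace Matrix

variable {ι : Type*} [Fintype ι]

theorem mulVec_star_of_transpose_eq {R : Type*} [CommSemiring R] [StarRing R] {A : Matrix ι ι R}
    (hA : Aᵀ = A) (w : ι → R) : A *ᵥ star w = star (Aᴴ *ᵥ w) := by
  rw [star_mulVec, conjTranspose_conjTranspose, ← mulVec_transpose, hA]

theorem exists_mulVec_eq_smul_star_of_conjTranspose_mul_self_mulVec {A : Matrix ι ι ℂ}
    (hA : Aᵀ = A) {σ : ℝ} {v : ι → ℂ} (hv : v ≠ 0)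
    (hAv : (Aᴴ * A) *ᵥ v = ((σ ^ 2 : ℝ) : ℂ) • v) :
    ∃ x : ι → ℂ, x ≠ 0 ∧ A *ᵥ x = (σ : ℂ) • star x := by
  set w := A *ᵥ v with hw
  have hAw : A *ᵥ star w = ((σ ^ 2 : ℝ) : ℂ) • star v := by
    rw [mulVec_star_of_transpose_eq hA, hw, mulVec_mulVec, hAv, star_smul, Complex.star_def,
      Complex.conj_ofReal]
  by_cases hx : (σ : ℂ) • v + star w = 0
  · have hw' : w = -((σ : ℂ) • star v) := by
      rw [← star_star w, eq_neg_of_add_eq_zero_right hx, star_neg, star_smul, Complex.star_def,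
        Complex.conj_ofReal]
    refine ⟨Complex.I • v, smul_ne_zero Complex.I_ne_zero hv, ?_⟩
    rw [mulVec_smul, ← hw, hw', star_smul, Complex.star_def, Complex.conj_I]
    module
  · refine ⟨_, hx, ?_⟩
    rw [mulVec_add, mulVec_smul, ← hw, hAw, star_add, star_smul, star_star, Complex.star_def,
      Complex.conj_ofReal]
    push_cast
    module

variable [DecidableEq ι]

theorem exists_mulVec_eq_smul_of_mem_spectrum {K : Type*} [Field K] {B : Matrix ι ι K} {μ : K}
    (h : μ ∈ spectrum K B) : ∃ v : ι → K, v ≠ 0 ∧ B *ᵥ v = μ • v := by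
  rw [← spectrum_toLin', ← Module.End.hasEigenvalue_iff_mem_spectrum] at h
  obtain ⟨v, hv⟩ := h.exists_hasEigenvector
  exact ⟨v, hv.2, by simpa using hv.apply_eq_smul⟩

theorem norm_le_l2_opNorm_of_mulVec_eq_smul_star {𝕜 : Type*} [RCLike 𝕜] {A : Matrix ι ι 𝕜}
    {c : 𝕜} {x : ι → 𝕜} (hx : x ≠ 0) (hAx : A *ᵥ x = c • star x) : ‖c‖ ≤ ‖A‖ := by
  have hnorm : ‖(EuclideanSpace.equiv ι 𝕜).symm (c • star x)‖ =
      ‖c‖ * ‖(EuclideanSpace.equiv ι 𝕜).symm x‖ := by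
    simp [EuclideanSpace.norm_eq, mul_pow, ← Finset.mul_sum, Real.sqrt_mul (sq_nonneg _)]
  have hpos : 0 < ‖(EuclideanSpace.equiv ι 𝕜).symm x‖ := by simpa using hx
  have hle := A.l2_opNorm_mulVec ((EuclideanSpace.equiv ι 𝕜).symm x)
  rw [show A *ᵥ (EuclideanSpace.equiv ι 𝕜).symm x = A *ᵥ x from rfl, hAx, hnorm] at hle
  exact le_of_mul_le_mul_right hle hpos

open scoped MatrixOrder ComplexOrder in
theorem exists_conjTranspose_mul_self_mulVec_eq_l2_opNorm_sq [Nonempty ι] (A : Matrix ι ι ℂ) :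
    ∃ v : ι → ℂ, v ≠ 0 ∧ (Aᴴ * A) *ᵥ v = ((‖A‖ ^ 2 : ℝ) : ℂ) • v := by
  have hmem := CStarAlgebra.norm_mem_spectrum_of_nonneg
    (nonneg_iff_posSemidef.mpr (posSemidef_conjTranspose_mul_self A))
  rw [l2_opNorm_conjTranspose_mul_self, ← sq, ← spectrum.algebraMap_mem_iff ℂ] at hmem
  exact exists_mulVec_eq_smul_of_mem_spectrum hmem

end Matrix

/-- Takagi-factorization consequence: the spectral norm of a complex symmetric
matrix is the supremum of its antilinear (con)eigenvalues. -/
theorem stmt_19 (n : ℕ) (A : Matrix (Fin n) (Fin n) ℂ) (hsym : Aᵀ = A) :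
    ‖A‖ = sSup {lam : ℝ | 0 ≤ lam ∧
      ∃ x : Fin n → ℂ, x ≠ 0 ∧ A.mulVec x = (lam : ℂ) • star x} := by
  rcases isEmpty_or_nonempty (Fin n) with _ | _
  · have hzero : ∀ x : Fin n → ℂ, x = 0 := fun x => Subsingleton.elim x 0
    simp [hzero, Subsingleton.elim A 0]
  · refine (IsGreatest.csSup_eq ⟨?_, ?_⟩).symm
    · obtain ⟨v, hv, hAv⟩ := exists_conjTranspose_mul_self_mulVec_eq_l2_opNorm_sq A
      exact ⟨norm_nonneg A, exists_mulVec_eq_smul_star_of_conjTranspose_mul_self_mulVec hsym hv hAv⟩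
    · rintro lam ⟨hlam, x, hx, hAx⟩
      simpa [abs_of_nonneg hlam] using norm_le_l2_opNorm_of_mulVec_eq_smul_star hx hAx
end
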